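/- There exist constants 0 < C_1 ≤ C_2 such that for all sufficiently large j, C_1 · Σ_{σ∈Λ_{j,r}} p_σ c_σ^r ≤ e_{φ_{j,r},r}(μ)^r ≤ C_2 · Σ_{σ∈Λ_{j,r}} p_σ c_σ^r. -/

import Mathlib

open Filter MeasureTheory
open scoped ENNReal

namespace QM

/-- A finite word is admissible w.r.t. `P` if consecutive transition probabilities
are positive. -/
def Adm {N : ℕ} (P : Matrix (Fin N) (Fin N) ℝ) (σ : List (Fin N)) : Prop :=
  List.Chain' (fun a b => 0 < P a b) σ

/-- An infinite word is admissible if all consecutive transition probabilities are positive. -/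
def AdmInf {N : ℕ} (P : Matrix (Fin N) (Fin N) ℝ) (τ : ℕ → Fin N) : Prop :=
  ∀ h : ℕ, 0 < P (τ h) (τ (h + 1))

/-- `wprod M σ = M σ₁ σ₂ * ⋯ * M σ_{k-1} σ_k`; equals `1` when `σ` has length at most 1. -/
noncomputable def wprod {N : ℕ} (M : Matrix (Fin N) (Fin N) ℝ) (σ : List (Fin N)) : ℝ :=
  ((σ.zip σ.tail).map fun x => M x.1 x.2).prod

/-- Spectral radius of a real square matrix: the largest modulus of a complex eigenvalue. -/
noncomputable def specRad {ι : Type} [Fintype ι] [DecidableEq ι] (A : Matrix ι ι ℝ) : ℝ :=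
  sSup {x : ℝ | ∃ z : ℂ,
    Module.End.HasEigenvalue (Matrix.toLin' (A.map (fun t => (t : ℂ)))) z ∧ x = ‖z‖}

/-- The matrix `A_{G,s}` with entries `(p_{ij} c_{ij}^r)^{s/(s+r)}` (zero when `p_{ij} = 0`). -/
noncomputable def AGs {N : ℕ} (P c : Matrix (Fin N) (Fin N) ℝ) (r s : ℝ) :
    Matrix (Fin N) (Fin N) ℝ :=
  Matrix.of fun i j => if 0 < P i j then (P i j * c i j ^ r) ^ (s / (s + r)) else 0

/-- `Ψ_G(s)`, the spectral radius of `A_{G,s}`. -/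
noncomputable def PsiG {N : ℕ} (P c : Matrix (Fin N) (Fin N) ℝ) (r s : ℝ) : ℝ :=
  specRad (AGs P c r s)

/-- The submatrix of `A_{G,s}` with rows and columns in `H`. -/
noncomputable def AHs {N : ℕ} (P c : Matrix (Fin N) (Fin N) ℝ) (r s : ℝ)
    (H : Finset (Fin N)) : Matrix {i // i ∈ H} {i // i ∈ H} ℝ :=
  Matrix.of fun i j => AGs P c r s i.1 j.1

/-- `Ψ_H(s)`, the spectral radius of `A_{H,s}`. -/
noncomputable def PsiH {N : ℕ} (P c : Matrix (Fin N) (Fin N) ℝ) (r s : ℝ)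
    (H : Finset (Fin N)) : ℝ :=
  specRad (AHs P c r s H)

/-- Edge relation of the directed graph `G` associated with `P`. -/
def Edge {N : ℕ} (P : Matrix (Fin N) (Fin N) ℝ) (i j : Fin N) : Prop := 0 < P i j

/-- Reachability along directed paths all of whose vertices lie in `S`. -/
def ReachIn {N : ℕ} (P : Matrix (Fin N) (Fin N) ℝ) (S : Set (Fin N)) (i j : Fin N) : Prop :=
  Relation.ReflTransGen (fun a b => Edge P a b ∧ a ∈ S ∧ b ∈ S) i j

/-- A set of vertices is strongly connected (with the inherited edges). -/
def StrConn {N : ℕ} (P : Matrix (Fin N) (Fin N) ℝ) (S : Set (Fin N)) : Prop :=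
  ∀ i ∈ S, ∀ j ∈ S, ReachIn P S i j

/-- `H` is a strongly connected component of `G` containing at least one edge. -/
def IsSCC {N : ℕ} (P : Matrix (Fin N) (Fin N) ℝ) (H : Finset (Fin N)) : Prop :=
  StrConn P ↑H ∧ (∀ S : Finset (Fin N), H ⊆ S → StrConn P ↑S → S = H) ∧
    ∃ i ∈ H, ∃ j ∈ H, Edge P i j

/-- `H₁ ≺ H₂` : some vertex of `H₂` can be reached from some vertex of `H₁` by a
directed path in `G`. -/
def Prec {N : ℕ} (P : Matrix (Fin N) (Fin N) ℝ) (H₁ H₂ : Finset (Fin N)) : Prop :=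
  ∃ i ∈ H₁, ∃ j ∈ H₂, Relation.ReflTransGen (Edge P) i j

/-- Irreducibility of `P` : the graph `G` is strongly connected. -/
def Irred {N : ℕ} (P : Matrix (Fin N) (Fin N) ℝ) : Prop :=
  ∀ i j : Fin N, Relation.TransGen (Edge P) i j

/-- `Γ` is a finite maximal antichain in `Ω^*`. -/
def IsMaxAntichain {N : ℕ} (P : Matrix (Fin N) (Fin N) ℝ) (Γ : Finset (List (Fin N))) : Prop :=
  (∀ σ ∈ Γ, σ ≠ [] ∧ Adm P σ) ∧
    (∀ σ ∈ Γ, ∀ ω ∈ Γ, σ ≠ ω → ¬ σ <+: ω) ∧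
    ∀ τ : ℕ → Fin N, AdmInf P τ → ∃ k : ℕ, 0 < k ∧ (List.range k).map τ ∈ Γ

/-- `Γ` is a finite maximal antichain in `H^*`. -/
def IsMaxAntichainIn {N : ℕ} (P : Matrix (Fin N) (Fin N) ℝ) (H : Finset (Fin N))
    (Γ : Finset (List (Fin N))) : Prop :=
  (∀ σ ∈ Γ, σ ≠ [] ∧ Adm P σ ∧ ∀ a ∈ σ, a ∈ H) ∧
    (∀ σ ∈ Γ, ∀ ω ∈ Γ, σ ≠ ω → ¬ σ <+: ω) ∧
    ∀ τ : ℕ → Fin N, AdmInf P τ → (∀ h, τ h ∈ H) → ∃ k : ℕ, 0 < k ∧ (List.range k).map τ ∈ Γ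

/-- `Γ` is a finite maximal antichain in `H^*(i)`. -/
def IsMaxAntichainInAt {N : ℕ} (P : Matrix (Fin N) (Fin N) ℝ) (H : Finset (Fin N)) (i : Fin N)
    (Γ : Finset (List (Fin N))) : Prop :=
  (∀ σ ∈ Γ, σ ≠ [] ∧ Adm P σ ∧ (∀ a ∈ σ, a ∈ H) ∧ σ.head? = some i) ∧
    (∀ σ ∈ Γ, ∀ ω ∈ Γ, σ ≠ ω → ¬ σ <+: ω) ∧
    ∀ τ : ℕ → Fin N, AdmInf P τ → (∀ h, τ h ∈ H) → τ 0 = i →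
      ∃ k : ℕ, 0 < k ∧ (List.range k).map τ ∈ Γ

/-- The `n`-th quantization error of order `r` for a measure on `ℝ^q`. -/
noncomputable def quantErr {q : ℕ} (ν : Measure (EuclideanSpace ℝ (Fin q))) (r : ℝ)
    (n : ℕ) : ℝ :=
  sInf {e : ℝ | ∃ α : Finset (EuclideanSpace ℝ (Fin q)), α.Nonempty ∧ α.card ≤ n ∧
    e = (∫ x, Metric.infDist x (↑α : Set (EuclideanSpace ℝ (Fin q))) ^ r ∂ν) ^ (1 / r)}

/-- The `s`-dimensional upper quantization coefficient of order `r`,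
`limsup_n n^{r/s} e_{n,r}^r`. -/
noncomputable def upperQCoeff {q : ℕ} (ν : Measure (EuclideanSpace ℝ (Fin q)))
    (r s : ℝ) : ℝ≥0∞ :=
  Filter.limsup (fun n : ℕ => ENNReal.ofReal ((n : ℝ) ^ (r / s) * quantErr ν r n ^ r))
    Filter.atTop

/-- The `s`-dimensional lower quantization coefficient of order `r`,
`liminf_n n^{r/s} e_{n,r}^r`. -/
noncomputable def lowerQCoeff {q : ℕ} (ν : Measure (EuclideanSpace ℝ (Fin q)))
    (r s : ℝ) : ℝ≥0∞ :=
  Filter.liminf (fun n : ℕ => ENNReal.ofReal ((n : ℝ) ^ (r / s) * quantErr ν r n ^ r))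
    Filter.atTop

/-- The upper quantization dimension of order `r`. -/
noncomputable def upperQDim {q : ℕ} (ν : Measure (EuclideanSpace ℝ (Fin q))) (r : ℝ) : ℝ :=
  Filter.limsup (fun n : ℕ => Real.log n / (- Real.log (quantErr ν r n))) Filter.atTop

/-- The lower quantization dimension of order `r`. -/
noncomputable def lowerQDim {q : ℕ} (ν : Measure (EuclideanSpace ℝ (Fin q))) (r : ℝ) : ℝ :=
  Filter.liminf (fun n : ℕ => Real.log n / (- Real.log (quantErr ν r n))) Filter.atTop

/-- `η = min {p_{ij} c_{ij}^r : p_{ij} > 0}`. -/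
noncomputable def eta {N : ℕ} (P c : Matrix (Fin N) (Fin N) ℝ) (r : ℝ) : ℝ :=
  sInf {x : ℝ | ∃ i j, 0 < P i j ∧ x = P i j * c i j ^ r}

/-- The finite maximal antichain `Λ_{j,r}`. -/
def Lambda {N : ℕ} (P c : Matrix (Fin N) (Fin N) ℝ) (r : ℝ) (j : ℕ) : Set (List (Fin N)) :=
  {σ | σ ≠ [] ∧ Adm P σ ∧
    eta P c r ^ j ≤ wprod P σ.dropLast * wprod c σ.dropLast ^ r ∧
    wprod P σ * wprod c σ ^ r < eta P c r ^ j}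

/-- `φ_{j,r}`, the cardinality of `Λ_{j,r}`. -/
noncomputable def phi {N : ℕ} (P c : Matrix (Fin N) (Fin N) ℝ) (r : ℝ) (j : ℕ) : ℕ :=
  (Lambda P c r j).ncard

end QM

/-!
`Λ_{j,r}` consists of the words at which the weight `p_σ c_σ^r` first drops below `η^j`. It is a
finite antichain, and each of its words has weight in `[η^(j+1), η^j)`.

Upper bound: put one point in each cylinder `J_σ`, `σ ∈ Λ_{j,r}`. These cylinders cover almost
everything, and the error on `J_σ` is at most `μ(J_σ) diam(J_σ)^r ≤ p_σ c_σ^r`.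

Lower bound: every vertex has two successors, so the level `j + 2(N+1)` stopping set has at least
`2^(N+1) φ_{j,r} ≥ (N+2) φ_{j,r}` words. Two of its cylinders with the same first letter are
separated by `t` times the larger diameter, so a point is `(t/2) c_σ`-close to at most one of them
per first letter. Hence `φ_{j,r}` points stay `(t/2) c_σ`-far from at least `φ_{j,r}` of these
cylinders, each contributing at least `(t/2)^r (min χ) η^(j+2N+3)`, while the sum over `Λ_{j,r}` is
at most `φ_{j,r} η^j`. Cylinders with distinct first letters may overlap, which costs the factor
`N + 1`.
-/

open Metric Finset

lemma List.zip_tail_append_singleton {α : Type*} :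
    ∀ (l : List α) (h : l ≠ []) (a : α),
      (l ++ [a]).zip (l ++ [a]).tail = l.zip l.tail ++ [(l.getLast h, a)]
  | [_], _, _ => rfl
  | x :: y :: l, _, a => by
    show (x, y) :: ((y :: l ++ [a]).zip (y :: l ++ [a]).tail) = _
    rw [List.zip_tail_append_singleton (y :: l) (List.cons_ne_nil _ _) a]
    simp [List.getLast]

lemma List.exists_eq_append_cons_of_not_prefix {α : Type*} :
    ∀ {l₁ l₂ : List α}, ¬ l₁ <+: l₂ → ¬ l₂ <+: l₁ →
      ∃ l a b t₁ t₂, a ≠ b ∧ l₁ = l ++ a :: t₁ ∧ l₂ = l ++ b :: t₂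
  | [], _, h, _ => absurd (List.nil_prefix) h
  | _ :: _, [], _, h => absurd (List.nil_prefix) h
  | a :: t₁, b :: t₂, h₁, h₂ => by
    by_cases hab : a = b
    · subst hab
      obtain ⟨l, c, d, s₁, s₂, hcd, rfl, rfl⟩ := List.exists_eq_append_cons_of_not_prefix
        (fun h => h₁ (List.cons_prefix_cons.2 ⟨rfl, h⟩))
        (fun h => h₂ (List.cons_prefix_cons.2 ⟨rfl, h⟩))
      exact ⟨a :: l, c, d, s₁, s₂, hcd, rfl, rfl⟩
    · exact ⟨[], a, b, t₁, t₂, hab, rfl, rfl⟩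

section Covering

open scoped Classical

variable {X ι : Type*} {f : X → ℝ} {s : Finset ι} {A : ι → Set X}

lemma sum_indicator_apply_eq_card_mul (x : X) :
    ∑ i ∈ s, (A i).indicator f x = #{i ∈ s | x ∈ A i} * f x := by
  rw [sum_indicator_eq_sum_filter s (fun _ => f) A (fun _ => x), sum_const, nsmul_eq_mul]

variable [MeasurableSpace X] {μ : Measure X}

lemma integral_le_sum_setIntegral (hf0 : 0 ≤ f) (hf : Integrable f μ)
    (hA : ∀ i ∈ s, MeasurableSet (A i)) (hcover : ∀ᵐ x ∂μ, ∃ i ∈ s, x ∈ A i) :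
    ∫ x, f x ∂μ ≤ ∑ i ∈ s, ∫ x in A i, f x ∂μ := by
  have hint : ∀ i ∈ s, Integrable ((A i).indicator f) μ := fun i hi => hf.indicator (hA i hi)
  calc ∫ x, f x ∂μ ≤ ∫ x, ∑ i ∈ s, (A i).indicator f x ∂μ := by
        refine integral_mono_ae hf (integrable_finsetSum s hint) ?_
        filter_upwards [hcover] with x ⟨i, hi, hx⟩
        rw [sum_indicator_apply_eq_card_mul]
        have : 1 ≤ #{i ∈ s | x ∈ A i} := card_pos.2 ⟨i, mem_filter.2 ⟨hi, hx⟩⟩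
        exact le_mul_of_one_le_left (hf0 x) (by exact_mod_cast this)
    _ = ∑ i ∈ s, ∫ x in A i, f x ∂μ := by
        rw [integral_finsetSum s hint]
        exact sum_congr rfl fun i hi => integral_indicator (hA i hi)

lemma sum_setIntegral_le_mul_integral {M : ℕ} (hf0 : 0 ≤ f) (hf : Integrable f μ)
    (hA : ∀ i ∈ s, MeasurableSet (A i)) (hmult : ∀ x, #{i ∈ s | x ∈ A i} ≤ M) :
    ∑ i ∈ s, ∫ x in A i, f x ∂μ ≤ M * ∫ x, f x ∂μ := by
  have hint : ∀ i ∈ s, Integrable ((A i).indicator f) μ := fun i hi => hf.indicator (hA i hi)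
  calc ∑ i ∈ s, ∫ x in A i, f x ∂μ = ∫ x, ∑ i ∈ s, (A i).indicator f x ∂μ := by
        rw [integral_finsetSum s hint]
        exact sum_congr rfl fun i hi => (integral_indicator (hA i hi)).symm
    _ ≤ ∫ x, M * f x ∂μ := by
        refine integral_mono (integrable_finsetSum s hint) (hf.const_mul _) fun x => ?_
        rw [sum_indicator_apply_eq_card_mul]
        exact mul_le_mul_of_nonneg_right (by convert Nat.cast_le (α := ℝ) |>.2 (hmult x)) (hf0 x)
    _ = M * ∫ x, f x ∂μ := integral_const_mul _ _

end Covering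

section Separated

open scoped Classical

variable {X ι L : Type*} [PseudoMetricSpace X] [Fintype L] {s : Finset ι} {A : ι → Set X}
  {ρ : ι → ℝ} {lab : ι → L}

lemma card_filter_exists_dist_lt_le
    (hsep : ∀ i ∈ s, ∀ k ∈ s, i ≠ k → lab i = lab k →
      ∀ x ∈ A i, ∀ y ∈ A k, ρ i + ρ k ≤ dist x y) (α : Finset X) :
    #{i ∈ s | ∃ a ∈ α, ∃ x ∈ A i, dist a x < ρ i} ≤ Fintype.card L * #α := by
  calc #{i ∈ s | ∃ a ∈ α, ∃ x ∈ A i, dist a x < ρ i}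
      ≤ #(α ×ˢ (univ : Finset L)) := by
        refine card_le_card_of_forall_subsingleton
          (fun i p => (∃ x ∈ A i, dist p.1 x < ρ i) ∧ lab i = p.2) ?_ ?_
        · intro i hi
          obtain ⟨-, a, ha, hx⟩ := mem_filter.1 hi
          exact ⟨(a, lab i), mem_product.2 ⟨ha, mem_univ _⟩, hx, rfl⟩
        · rintro ⟨a, l⟩ - i ⟨hi, ⟨x, hx, hax⟩, rfl⟩ k ⟨hk, ⟨y, hy, hay⟩, hl⟩
          by_contra hik
          have := hsep i (mem_filter.1 hi).1 k (mem_filter.1 hk).1 hik hl.symm x hx y hy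
          linarith [dist_triangle_left x y a]
    _ = Fintype.card L * #α := by rw [card_product, card_univ, mul_comm]

lemma card_sub_mul_le_integral_infDist_rpow [MeasurableSpace X] [BorelSpace X] {μ : Measure X}
    [IsFiniteMeasure μ]
    (hsep : ∀ i ∈ s, ∀ k ∈ s, i ≠ k → lab i = lab k →
      ∀ x ∈ A i, ∀ y ∈ A k, ρ i + ρ k ≤ dist x y)
    (hρ : ∀ i ∈ s, 0 < ρ i) (hA : ∀ i ∈ s, MeasurableSet (A i)) {r : ℝ} (hr : 0 ≤ r)
    {κ : ℝ} (hκ0 : 0 ≤ κ) (hκ : ∀ i ∈ s, κ ≤ ρ i ^ r * μ.real (A i))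
    {α : Finset X} (hα : α.Nonempty) (hint : Integrable (fun x => infDist x α ^ r) μ) :
    ((#s : ℝ) - Fintype.card L * #α) * κ ≤ Fintype.card L * ∫ x, infDist x α ^ r ∂μ := by
  set far := {i ∈ s | ¬ ∃ a ∈ α, ∃ x ∈ A i, dist a x < ρ i}
  have hfar_card : (#s : ℝ) - Fintype.card L * #α ≤ #far := by
    have h : #{i ∈ s | ∃ a ∈ α, ∃ x ∈ A i, dist a x < ρ i} + #far = #s := by
      convert card_filter_add_card_filter_not (s := s) _
    have hnear := card_filter_exists_dist_lt_le hsep α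
    have : #s ≤ Fintype.card L * #α + #far := by omega
    have : (#s : ℝ) ≤ Fintype.card L * #α + #far := by exact_mod_cast this
    linarith
  have hfar_integral : ∀ i ∈ far, κ ≤ ∫ x in A i, infDist x α ^ r ∂μ := by
    intro i hi
    obtain ⟨his, hfar⟩ := mem_filter.1 hi
    push Not at hfar
    refine (hκ i his).trans (setIntegral_ge_of_const_le_real (hA i his) (measure_ne_top _ _)
      (fun x hx => ?_) hint.integrableOn)
    refine Real.rpow_le_rpow (hρ i his).le ((le_infDist (α.coe_nonempty.2 hα)).2 ?_) hr
    exact fun a ha => dist_comm x a ▸ hfar a ha x hx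
  have hmult : ∀ x, #{i ∈ far | x ∈ A i} ≤ Fintype.card L := by
    intro x
    calc #{i ∈ far | x ∈ A i}
        ≤ #{i ∈ s | ∃ a ∈ ({x} : Finset X), ∃ y ∈ A i, dist a y < ρ i} := by
          refine card_le_card fun i hi => ?_
          obtain ⟨hi, hx⟩ := mem_filter.1 hi
          have his := (mem_filter.1 hi).1
          exact mem_filter.2 ⟨his, x, mem_singleton_self x, x, hx, by simpa using hρ i his⟩
      _ ≤ Fintype.card L := by simpa using card_filter_exists_dist_lt_le hsep {x}
  calc ((#s : ℝ) - Fintype.card L * #α) * κ ≤ #far * κ :=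
        mul_le_mul_of_nonneg_right hfar_card hκ0
    _ ≤ ∑ i ∈ far, ∫ x in A i, infDist x α ^ r ∂μ := by
        simpa using card_nsmul_le_sum far _ κ hfar_integral
    _ ≤ Fintype.card L * ∫ x, infDist x α ^ r ∂μ :=
        sum_setIntegral_le_mul_integral (fun x => Real.rpow_nonneg infDist_nonneg r) hint
          (fun i hi => hA i (mem_filter.1 hi).1) hmult
end Separated

lemma integrable_infDist_rpow {X : Type*} [MetricSpace X] [MeasurableSpace X] [BorelSpace X]
    {μ : Measure X} [IsFiniteMeasure μ] {B : Set X} (hB : Bornology.IsBounded B)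
    (hμB : ∀ᵐ x ∂μ, x ∈ B) {α : Set X} (hα : α.Nonempty) {r : ℝ} (hr : 0 ≤ r) :
    Integrable (fun x => infDist x α ^ r) μ := by
  obtain ⟨a, ha⟩ := hα
  obtain ⟨R, hR⟩ := hB.subset_closedBall a
  refine Integrable.of_bound
    ((continuous_infDist_pt α).rpow_const fun _ => Or.inr hr).aestronglyMeasurable (R ^ r) ?_
  filter_upwards [hμB] with x hx
  rw [Real.norm_of_nonneg (Real.rpow_nonneg infDist_nonneg r)]
  exact Real.rpow_le_rpow infDist_nonneg ((infDist_le_dist_of_mem ha).trans (hR hx)) hr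

namespace QM

section Quantization

variable {q : ℕ} {μ : Measure (EuclideanSpace ℝ (Fin q))} {r : ℝ} {n : ℕ}

lemma quantErr_rpow_le (hr : 0 < r) {α : Finset (EuclideanSpace ℝ (Fin q))} (hα : α.Nonempty)
    (hn : #α ≤ n) {B : ℝ} (hB : ∫ x, infDist x (α : Set _) ^ r ∂μ ≤ B) :
    quantErr μ r n ^ r ≤ B := by
  have hint (β : Finset (EuclideanSpace ℝ (Fin q))) : 0 ≤ ∫ x, infDist x (β : Set _) ^ r ∂μ :=
    integral_nonneg fun x => Real.rpow_nonneg infDist_nonneg r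
  have hle : quantErr μ r n ≤ (∫ x, infDist x (α : Set _) ^ r ∂μ) ^ (1 / r) :=
    csInf_le ⟨0, by rintro e ⟨β, -, -, rfl⟩; exact Real.rpow_nonneg (hint β) _⟩ ⟨α, hα, hn, rfl⟩
  have h0 : 0 ≤ quantErr μ r n :=
    le_csInf ⟨_, α, hα, hn, rfl⟩ (by rintro e ⟨β, -, -, rfl⟩; exact Real.rpow_nonneg (hint β) _)
  calc quantErr μ r n ^ r ≤ ((∫ x, infDist x (α : Set _) ^ r ∂μ) ^ (1 / r)) ^ r :=
        Real.rpow_le_rpow h0 hle hr.le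
    _ = ∫ x, infDist x (α : Set _) ^ r ∂μ := by rw [one_div, Real.rpow_inv_rpow (hint α) hr.ne']
    _ ≤ B := hB

lemma le_quantErr_rpow (hr : 0 < r) (hn : 1 ≤ n) {A : ℝ} (hA : 0 ≤ A)
    (h : ∀ α : Finset (EuclideanSpace ℝ (Fin q)), α.Nonempty → #α ≤ n →
      A ≤ ∫ x, infDist x (α : Set _) ^ r ∂μ) :
    A ≤ quantErr μ r n ^ r := by
  have hle : A ^ (1 / r) ≤ quantErr μ r n := by
    refine le_csInf ⟨_, {0}, singleton_nonempty _, by simpa using hn, rfl⟩ ?_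
    rintro e ⟨β, hβ, hβn, rfl⟩
    exact Real.rpow_le_rpow hA (h β hβ hβn) (by positivity)
  calc A = (A ^ (1 / r)) ^ r := by rw [one_div, Real.rpow_inv_rpow hA hr.ne']
    _ ≤ quantErr μ r n ^ r := Real.rpow_le_rpow (Real.rpow_nonneg hA _) hle hr.le

lemma quantErr_rpow_le_sum [IsFiniteMeasure μ] (hr : 0 < r) {ι : Type*} {s : Finset ι}
    (hs : s.Nonempty) {A : ι → Set (EuclideanSpace ℝ (Fin q))}
    (hA : ∀ i ∈ s, IsCompact (A i) ∧ (A i).Nonempty) (hcover : ∀ᵐ x ∂μ, ∃ i ∈ s, x ∈ A i) :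
    quantErr μ r #s ^ r ≤ ∑ i ∈ s, μ.real (A i) * diam (A i) ^ r := by
  choose! pt hpt using fun i hi => (hA i hi).2
  set α := s.image pt
  have hint : Integrable (fun x => infDist x (α : Set _) ^ r) μ := by
    refine integrable_infDist_rpow ((Bornology.isBounded_biUnion_finset s).2
      fun i hi => (hA i hi).1.isBounded) ?_ (coe_nonempty.2 (hs.image pt)) hr.le
    filter_upwards [hcover] with x ⟨i, hi, hx⟩
    exact Set.mem_biUnion hi hx
  refine quantErr_rpow_le hr (hs.image pt) card_image_le ?_
  refine (integral_le_sum_setIntegral (fun x => Real.rpow_nonneg infDist_nonneg r) hint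
    (fun i hi => (hA i hi).1.measurableSet) hcover).trans (sum_le_sum fun i hi => ?_)
  have hbound : ∀ x ∈ A i, ‖infDist x (α : Set _) ^ r‖ ≤ diam (A i) ^ r := fun x hx => by
    rw [Real.norm_of_nonneg (Real.rpow_nonneg infDist_nonneg r)]
    refine Real.rpow_le_rpow infDist_nonneg ?_ hr.le
    exact (infDist_le_dist_of_mem (mem_coe.2 (mem_image_of_mem pt hi))).trans
      (dist_le_diam_of_mem (hA i hi).1.isBounded hx (hpt i hi))
  rw [mul_comm]
  exact (le_abs_self _).trans (norm_setIntegral_le_of_norm_le_const (measure_lt_top _ _) hbound)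

end Quantization

variable {N : ℕ}

section Words

variable {P M : Matrix (Fin N) (Fin N) ℝ} {σ ρ ω : List (Fin N)}

@[simp] lemma wprod_nil : wprod M [] = 1 := rfl

@[simp] lemma wprod_singleton (i : Fin N) : wprod M [i] = 1 := rfl

lemma wprod_append_singleton (h : σ ≠ []) (a : Fin N) :
    wprod M (σ ++ [a]) = wprod M σ * M (σ.getLast h) a := by
  simp [wprod, List.zip_tail_append_singleton σ h a]

lemma adm_append_singleton_iff (h : σ ≠ []) (a : Fin N) :
    Adm P (σ ++ [a]) ↔ Adm P σ ∧ 0 < P (σ.getLast h) a := by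
  change List.IsChain _ _ ↔ List.IsChain _ _ ∧ _
  simp [List.isChain_append, List.getLast?_eq_some_getLast h]

lemma Adm.of_prefix (hω : Adm P ω) (h : σ <+: ω) : Adm P σ := List.IsChain.prefix hω h

lemma Adm.exists_extension (hout : ∀ i, ∃ j, 0 < P i j) (hσ : σ ≠ []) (hadm : Adm P σ)
    (k : ℕ) : ∃ ω, Adm P ω ∧ σ <+: ω ∧ ω.length = σ.length + k := by
  induction k with
  | zero => exact ⟨σ, hadm, List.prefix_refl σ, rfl⟩
  | succ k ih =>
    obtain ⟨ω, hω, hσω, hlen⟩ := ih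
    have hω0 : ω ≠ [] := fun h => hσ (List.prefix_nil.1 (h ▸ hσω))
    obtain ⟨a, ha⟩ := hout (ω.getLast hω0)
    exact ⟨ω ++ [a], (adm_append_singleton_iff hω0 a).2 ⟨hω, ha⟩,
      hσω.trans (List.prefix_append _ _), by simp [hlen, add_assoc]⟩

lemma wprod_pos (hM : ∀ i j, 0 < P i j → 0 < M i j) (hσ : Adm P σ) : 0 < wprod M σ := by
  induction σ using List.reverseRecOn with
  | nil => simp
  | append_singleton τ a ih =>
    rcases eq_or_ne τ [] with rfl | hτ
    · simp
    obtain ⟨hτ', ha⟩ := (adm_append_singleton_iff hτ a).1 hσ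
    rw [wprod_append_singleton hτ]
    exact mul_pos (ih hτ') (hM _ _ ha)

lemma wprod_le_mul_pow_of_prefix {θ : ℝ} (hM : ∀ i j, 0 < P i j → 0 < M i j)
    (hMθ : ∀ i j, 0 < P i j → M i j ≤ θ) (hω : Adm P ω) (hρω : ρ <+: ω) (hρ : ρ ≠ []) :
    wprod M ω ≤ wprod M ρ * θ ^ (ω.length - ρ.length) := by
  induction ω using List.reverseRecOn with
  | nil => exact absurd (List.prefix_nil.1 hρω) hρ
  | append_singleton τ a ih =>
    rcases List.prefix_concat_iff.1 hρω with rfl | hρτ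
    · simp
    have hτ : τ ≠ [] := fun h => hρ (List.prefix_nil.1 (h ▸ hρτ))
    obtain ⟨hτ', ha⟩ := (adm_append_singleton_iff hτ a).1 hω
    have hθ : 0 ≤ θ := ((hM _ _ ha).le).trans (hMθ _ _ ha)
    have hlen : (τ ++ [a]).length - ρ.length = τ.length - ρ.length + 1 := by
      simp only [List.length_append, List.length_singleton]
      have := hρτ.length_le
      omega
    rw [wprod_append_singleton hτ, hlen, pow_succ, ← mul_assoc]
    exact mul_le_mul (ih hτ' hρτ) (hMθ _ _ ha) ((hM _ _ ha).le)
      (mul_nonneg (wprod_pos hM (hτ'.of_prefix hρτ)).le (pow_nonneg hθ _))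

lemma wprod_le_of_prefix (hM : ∀ i j, 0 < P i j → 0 < M i j)
    (hM1 : ∀ i j, 0 < P i j → M i j ≤ 1) (hω : Adm P ω) (hρω : ρ <+: ω) (hρ : ρ ≠ []) :
    wprod M ω ≤ wprod M ρ := by
  simpa using wprod_le_mul_pow_of_prefix hM hM1 hω hρω hρ

lemma wprod_le_pow_length {θ : ℝ} (hM : ∀ i j, 0 < P i j → 0 < M i j)
    (hMθ : ∀ i j, 0 < P i j → M i j ≤ θ) (hσ : Adm P σ) (h : σ ≠ []) :
    wprod M σ ≤ θ ^ (σ.length - 1) := by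
  have hhead : [σ.head h] <+: σ := ⟨σ.tail, List.cons_head_tail h⟩
  simpa using wprod_le_mul_pow_of_prefix hM hMθ hσ hhead (List.cons_ne_nil _ _)

lemma wprod_mul_wprod_rpow {c : Matrix (Fin N) (Fin N) ℝ} {r : ℝ}
    (hc : ∀ i j, 0 < P i j → 0 < c i j) (hσ : Adm P σ) :
    wprod M σ * wprod c σ ^ r = wprod (Matrix.of fun i j => M i j * c i j ^ r) σ := by
  induction σ using List.reverseRecOn with
  | nil => simp
  | append_singleton τ a ih =>
    rcases eq_or_ne τ [] with rfl | hτ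
    · simp
    obtain ⟨hτ', ha⟩ := (adm_append_singleton_iff hτ a).1 hσ
    rw [wprod_append_singleton hτ, wprod_append_singleton hτ, wprod_append_singleton hτ, ← ih hτ',
      Real.mul_rpow (wprod_pos hc hτ').le (hc _ _ ha).le, Matrix.of_apply]
    ring

end Words

def levelWords (P W : Matrix (Fin N) (Fin N) ℝ) (δ : ℝ) : Set (List (Fin N)) :=
  {σ | σ ≠ [] ∧ Adm P σ ∧ δ ≤ wprod W σ.dropLast ∧ wprod W σ < δ}

section LevelWords

variable {P W : Matrix (Fin N) (Fin N) ℝ} {δ η θ : ℝ} {σ τ ω : List (Fin N)}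

lemma ne_singleton_of_mem_levelWords (hσ : σ ∈ levelWords P W δ) (a : Fin N) : σ ≠ [a] := by
  rintro rfl
  obtain ⟨-, -, h1, h2⟩ := hσ
  simp only [List.dropLast_singleton, wprod_nil, wprod_singleton] at h1 h2
  linarith

lemma exists_prefix_mem_levelWords (hδ : δ ≤ 1) (hσ : σ ≠ []) (hadm : Adm P σ)
    (hlt : wprod W σ < δ) : ∃ ρ ∈ levelWords P W δ, ρ <+: σ := by
  induction σ using List.reverseRecOn with
  | nil => exact absurd rfl hσ
  | append_singleton τ a ih =>
    rcases eq_or_ne τ [] with rfl | hτ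
    · simp only [List.nil_append, wprod_singleton] at hlt
      linarith
    by_cases hτδ : wprod W τ < δ
    · obtain ⟨ρ, hρ, hρτ⟩ := ih hτ (hadm.of_prefix (List.prefix_append _ _)) hτδ
      exact ⟨ρ, hρ, hρτ.trans (List.prefix_append _ _)⟩
    · exact ⟨τ ++ [a], ⟨hσ, hadm, by simpa using hτδ, hlt⟩, List.prefix_refl _⟩

lemma eq_of_prefix_of_mem_levelWords (hW : ∀ i j, 0 < P i j → 0 < W i j)
    (hW1 : ∀ i j, 0 < P i j → W i j ≤ 1) (hσ : σ ∈ levelWords P W δ)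
    (hω : ω ∈ levelWords P W δ) (hσω : σ <+: ω) : σ = ω := by
  obtain ⟨hω0, hωadm, hωδ, -⟩ := hω
  obtain ⟨τ, b, rfl⟩ := List.eq_nil_or_concat ω |>.resolve_left hω0
  rw [List.concat_eq_append] at *
  rcases List.prefix_concat_iff.1 hσω with h | hστ
  · exact h
  rw [List.dropLast_concat] at hωδ
  have := wprod_le_of_prefix hW hW1 (hωadm.of_prefix (List.prefix_append _ _)) hστ hσ.1
  linarith [hσ.2.2.2]
lemma levelWords_finite (hW : ∀ i j, 0 < P i j → 0 < W i j)
    (hWθ : ∀ i j, 0 < P i j → W i j ≤ θ) (hθ : θ < 1) (hδ : 0 < δ) :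
    (levelWords P W δ).Finite := by
  have hWθ' : ∀ i j, 0 < P i j → W i j ≤ max θ 0 :=
    fun i j h => (hWθ i j h).trans (le_max_left _ _)
  obtain ⟨K, hK⟩ := exists_pow_lt_of_lt_one hδ (max_lt hθ zero_lt_one)
  refine (List.finite_length_le (Fin N) (K + 1)).subset fun σ hσ => ?_
  obtain ⟨-, hadm, hδσ, -⟩ := hσ
  by_contra hlong
  rw [Set.mem_ofPred, not_le] at hlong
  have hd : σ.dropLast ≠ [] := by
    rw [← List.length_pos_iff, List.length_dropLast]
    omega
  have := wprod_le_pow_length hW hWθ' (hadm.of_prefix (List.dropLast_prefix σ)) hd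
  have := pow_le_pow_of_le_one (le_max_right θ 0) (max_lt hθ zero_lt_one).le
    (show K ≤ σ.dropLast.length - 1 by rw [List.length_dropLast]; omega)
  linarith

lemma mul_le_wprod_of_mem_levelWords (hη : 0 < η) (hηW : ∀ i j, 0 < P i j → η ≤ W i j)
    (hσ : σ ∈ levelWords P W δ) : δ * η ≤ wprod W σ := by
  obtain ⟨τ, b, rfl⟩ := List.eq_nil_or_concat σ |>.resolve_left hσ.1
  rw [List.concat_eq_append] at *
  have hτ : τ ≠ [] := by
    rintro rfl
    exact ne_singleton_of_mem_levelWords hσ b rfl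
  obtain ⟨-, hadm, hδτ, -⟩ := hσ
  obtain ⟨hτadm, hb⟩ := (adm_append_singleton_iff hτ b).1 hadm
  rw [List.dropLast_concat] at hδτ
  rw [wprod_append_singleton hτ]
  exact mul_le_mul hδτ (hηW _ _ hb) hη.le
    (wprod_pos (fun i j h => hη.trans_le (hηW i j h)) hτadm).le

lemma exists_mem_levelWords_of_le (hout : ∀ i, ∃ j, 0 < P i j)
    (hW : ∀ i j, 0 < P i j → 0 < W i j) (hWθ : ∀ i j, 0 < P i j → W i j ≤ θ) (hθ : θ < 1)
    (hδ : 0 < δ) (hτ : τ ≠ []) (hadm : Adm P τ) (hle : δ ≤ wprod W τ) :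
    ∃ ω ∈ levelWords P W δ, τ <+: ω := by
  have hW1 : ∀ i j, 0 < P i j → W i j ≤ 1 := fun i j h => (hWθ i j h).trans hθ.le
  have hτW := wprod_pos hW hadm
  obtain ⟨k, hk⟩ := exists_pow_lt_of_lt_one (div_pos hδ hτW) hθ
  obtain ⟨ω, hωadm, hτω, hlen⟩ := hadm.exists_extension hout hτ k
  have hωδ : wprod W ω < δ := calc
    wprod W ω ≤ wprod W τ * θ ^ (ω.length - τ.length) :=
      wprod_le_mul_pow_of_prefix hW hWθ hωadm hτω hτ
    _ < wprod W τ * (δ / wprod W τ) := by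
      rw [hlen, Nat.add_sub_cancel_left]
      exact mul_lt_mul_of_pos_left hk hτW
    _ = δ := mul_div_cancel₀ _ hτW.ne'
  have hω0 : ω ≠ [] := fun h => hτ (List.prefix_nil.1 (h ▸ hτω))
  have hδ1 : δ ≤ 1 := hle.trans (by simpa using wprod_le_pow_length hW hW1 hadm hτ)
  obtain ⟨ρ, hρ, hρω⟩ := exists_prefix_mem_levelWords hδ1 hω0 hωadm hωδ
  refine ⟨ρ, hρ, (List.prefix_or_prefix_of_prefix hτω hρω).resolve_right fun hρτ => ?_⟩
  have := wprod_le_of_prefix hW hW1 hadm hρτ hρ.1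
  linarith [hρ.2.2.2]

lemma levelWords_nonempty (i : Fin N) (hout : ∀ i, ∃ j, 0 < P i j)
    (hW : ∀ i j, 0 < P i j → 0 < W i j) (hWθ : ∀ i j, 0 < P i j → W i j ≤ θ) (hθ : θ < 1)
    (hδ : 0 < δ) (hδ1 : δ ≤ 1) : (levelWords P W δ).Nonempty :=
  let ⟨ω, hω, _⟩ := exists_mem_levelWords_of_le hout hW hWθ hθ hδ (List.cons_ne_nil i [])
    (List.isChain_singleton i) (by simpa using hδ1)
  ⟨ω, hω⟩

open scoped Classical in
/-- Every word of `Λ(δ)` has two children, hence two descendants in `Λ(δ η²)`, and no word of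
`Λ(δ η²)` descends from two words of `Λ(δ)`. -/
lemma two_mul_ncard_levelWords_le (hout2 : ∀ i, ∃ a b, a ≠ b ∧ 0 < P i a ∧ 0 < P i b)
    (hη : 0 < η) (hηW : ∀ i j, 0 < P i j → η ≤ W i j) (hWθ : ∀ i j, 0 < P i j → W i j ≤ θ)
    (hθ : θ < 1) (hδ : 0 < δ) :
    2 * (levelWords P W δ).ncard ≤ (levelWords P W (δ * η ^ 2)).ncard := by
  have hW : ∀ i j, 0 < P i j → 0 < W i j := fun i j h => hη.trans_le (hηW i j h)
  have hW1 : ∀ i j, 0 < P i j → W i j ≤ 1 := fun i j h => (hWθ i j h).trans hθ.le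
  have hout : ∀ i, ∃ j, 0 < P i j := fun i => (hout2 i).imp fun _ ⟨_, _, ha, _⟩ => ha
  have hδ' : 0 < δ * η ^ 2 := by positivity
  have hchild : ∀ σ ∈ levelWords P W δ, ∀ a, Adm P (σ ++ [a]) →
      ∃ ω ∈ levelWords P W (δ * η ^ 2), σ ++ [a] <+: ω := by
    intro σ hσ a ha
    refine exists_mem_levelWords_of_le hout hW hWθ hθ hδ' (by simp) ha ?_
    obtain ⟨hσadm, hedge⟩ := (adm_append_singleton_iff hσ.1 a).1 ha
    rw [wprod_append_singleton hσ.1, pow_two, ← mul_assoc]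
    exact mul_le_mul (mul_le_wprod_of_mem_levelWords hη hηW hσ) (hηW _ _ hedge) hη.le
      (wprod_pos hW hσadm).le
  have hfin := levelWords_finite hW hWθ hθ hδ
  have hfin' := levelWords_finite hW hWθ hθ hδ'
  rw [Set.ncard_eq_toFinset_card _ hfin, Set.ncard_eq_toFinset_card _ hfin', mul_comm,
    ← mul_one (hfin'.toFinset.card)]
  refine Finset.card_mul_le_card_mul (· <+: ·) (fun σ hσ => ?_) (fun ω hω => ?_)
  · rw [Set.Finite.mem_toFinset] at hσ
    obtain ⟨a, b, hab, ha, hb⟩ := hout2 (σ.getLast hσ.1)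
    obtain ⟨ω₁, h₁, ha₁⟩ := hchild σ hσ a ((adm_append_singleton_iff hσ.1 a).2 ⟨hσ.2.1, ha⟩)
    obtain ⟨ω₂, h₂, hb₂⟩ := hchild σ hσ b ((adm_append_singleton_iff hσ.1 b).2 ⟨hσ.2.1, hb⟩)
    refine Finset.one_lt_card.2 ⟨ω₁, ?_, ω₂, ?_, fun h => hab ?_⟩
    · exact (Finset.mem_bipartiteAbove _).2 ⟨hfin'.mem_toFinset.2 h₁,
        (List.prefix_append _ _).trans ha₁⟩
    · exact (Finset.mem_bipartiteAbove _).2 ⟨hfin'.mem_toFinset.2 h₂,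
        (List.prefix_append _ _).trans hb₂⟩
    have := (List.prefix_of_prefix_length_le ha₁ (h ▸ hb₂) (by simp)).eq_of_length (by simp)
    simpa using this
  · refine Finset.card_le_one.2 fun σ hσ σ' hσ' => ?_
    obtain ⟨hσL, hσω⟩ := (Finset.mem_bipartiteBelow _).1 hσ
    obtain ⟨hσ'L, hσ'ω⟩ := (Finset.mem_bipartiteBelow _).1 hσ'
    rw [Set.Finite.mem_toFinset] at hσL hσ'L
    rcases List.prefix_or_prefix_of_prefix hσω hσ'ω with h | h
    · exact eq_of_prefix_of_mem_levelWords hW hW1 hσL hσ'L h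
    · exact (eq_of_prefix_of_mem_levelWords hW hW1 hσ'L hσL h).symm

lemma two_pow_mul_ncard_levelWords_le (hout2 : ∀ i, ∃ a b, a ≠ b ∧ 0 < P i a ∧ 0 < P i b)
    (hη : 0 < η) (hηW : ∀ i j, 0 < P i j → η ≤ W i j) (hWθ : ∀ i j, 0 < P i j → W i j ≤ θ)
    (hθ : θ < 1) (hδ : 0 < δ) (k : ℕ) :
    2 ^ k * (levelWords P W δ).ncard ≤ (levelWords P W (δ * η ^ (2 * k))).ncard := by
  induction k with
  | zero => simp
  | succ k ih =>
    calc 2 ^ (k + 1) * (levelWords P W δ).ncard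
        ≤ 2 * (levelWords P W (δ * η ^ (2 * k))).ncard := by rw [pow_succ', mul_assoc]; omega
      _ ≤ (levelWords P W (δ * η ^ (2 * k) * η ^ 2)).ncard :=
        two_mul_ncard_levelWords_le hout2 hη hηW hWθ hθ (by positivity)
      _ = (levelWords P W (δ * η ^ (2 * (k + 1)))).ncard := by ring_nf

end LevelWords

section EdgeWeights

variable {P c : Matrix (Fin N) (Fin N) ℝ} {r : ℝ}

noncomputable def edgeWeight (P c : Matrix (Fin N) (Fin N) ℝ) (r : ℝ) :
    Matrix (Fin N) (Fin N) ℝ :=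
  Matrix.of fun i j => P i j * c i j ^ r

def edgeWeights (P c : Matrix (Fin N) (Fin N) ℝ) (r : ℝ) : Set ℝ :=
  {x | ∃ i j, 0 < P i j ∧ x = edgeWeight P c r i j}

lemma exists_two_edges (hPcard : ∀ i : Fin N, 2 ≤ {j : Fin N | 0 < P i j}.ncard) (i : Fin N) :
    ∃ a b, a ≠ b ∧ 0 < P i a ∧ 0 < P i b := by
  obtain ⟨a, ha, b, hb, hab⟩ := (Set.one_lt_ncard (Set.toFinite _)).1 (hPcard i)
  exact ⟨a, b, hab, ha, hb⟩

lemma edgeWeights_finite : (edgeWeights P c r).Finite :=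
  (Set.finite_range fun p : Fin N × Fin N => edgeWeight P c r p.1 p.2).subset
    fun _ ⟨i, j, _, hx⟩ => ⟨(i, j), hx.symm⟩

lemma edgeWeights_nonempty (i : Fin N) (hout : ∀ i, ∃ j, 0 < P i j) :
    (edgeWeights P c r).Nonempty :=
  let ⟨j, hj⟩ := hout i
  ⟨_, i, j, hj, rfl⟩

lemma edgeWeight_pos (hc : ∀ i j, 0 < P i j → 0 < c i j) {i j : Fin N} (h : 0 < P i j) :
    0 < edgeWeight P c r i j :=
  mul_pos h (Real.rpow_pos_of_pos (hc i j h) r)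

lemma edgeWeight_lt_one (hr : 0 < r) (hP0 : ∀ i j, 0 ≤ P i j) (hProw : ∀ i, ∑ j, P i j = 1)
    (hc1 : ∀ i j, 0 < P i j → 0 < c i j ∧ c i j < 1) {i j : Fin N} (h : 0 < P i j) :
    edgeWeight P c r i j < 1 := by
  have hP1 : P i j ≤ 1 := hProw i ▸ Finset.single_le_sum (fun k _ => hP0 i k) (Finset.mem_univ j)
  calc P i j * c i j ^ r ≤ 1 * c i j ^ r :=
        mul_le_mul_of_nonneg_right hP1 (Real.rpow_nonneg (hc1 i j h).1.le r)
    _ < 1 := by simpa using Real.rpow_lt_one (hc1 i j h).1.le (hc1 i j h).2 hr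

lemma eta_eq_sInf : eta P c r = sInf (edgeWeights P c r) := rfl

lemma eta_le_edgeWeight {i j : Fin N} (h : 0 < P i j) : eta P c r ≤ edgeWeight P c r i j :=
  csInf_le edgeWeights_finite.bddBelow ⟨i, j, h, rfl⟩

lemma eta_pos (i : Fin N) (hout : ∀ i, ∃ j, 0 < P i j) (hc : ∀ i j, 0 < P i j → 0 < c i j) :
    0 < eta P c r := by
  rw [eta_eq_sInf]
  obtain ⟨i, j, h, hx⟩ := (edgeWeights_nonempty (r := r) i hout).csInf_mem edgeWeights_finite
  exact hx ▸ edgeWeight_pos hc h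

lemma exists_edgeWeight_le (i : Fin N) (hout : ∀ i, ∃ j, 0 < P i j) (hr : 0 < r)
    (hP0 : ∀ i j, 0 ≤ P i j) (hProw : ∀ i, ∑ j, P i j = 1)
    (hc1 : ∀ i j, 0 < P i j → 0 < c i j ∧ c i j < 1) :
    ∃ θ < 1, ∀ i j, 0 < P i j → edgeWeight P c r i j ≤ θ := by
  refine ⟨sSup (edgeWeights P c r), ?_, fun i j h =>
    le_csSup edgeWeights_finite.bddAbove ⟨i, j, h, rfl⟩⟩
  obtain ⟨i, j, h, hx⟩ := (edgeWeights_nonempty (r := r) i hout).csSup_mem edgeWeights_finite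
  exact hx ▸ edgeWeight_lt_one hr hP0 hProw hc1 h

lemma Lambda_eq_levelWords (hc : ∀ i j, 0 < P i j → 0 < c i j) (j : ℕ) :
    Lambda P c r j = levelWords P (edgeWeight P c r) (eta P c r ^ j) := by
  ext σ
  refine and_congr_right fun _ => and_congr_right fun hadm => ?_
  rw [edgeWeight, ← wprod_mul_wprod_rpow hc hadm,
    ← wprod_mul_wprod_rpow hc (hadm.of_prefix σ.dropLast_prefix)]

end EdgeWeights

section Cylinders

variable {X : Type*} {P c : Matrix (Fin N) (Fin N) ℝ}
  {J : List (Fin N) → Set X} {σ ρ ω : List (Fin N)}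

lemma diam_cylinder_eq_wprod [PseudoMetricSpace X] (hJdiam1 : ∀ i : Fin N, diam (J [i]) = 1)
    (hJdiam : ∀ (σ : List (Fin N)) (a : Fin N) (h : σ ≠ []), Adm P (σ ++ [a]) →
      diam (J (σ ++ [a])) = c (σ.getLast h) a * diam (J σ))
    (hσ : σ ≠ []) (hadm : Adm P σ) : diam (J σ) = wprod c σ := by
  induction σ using List.reverseRecOn with
  | nil => exact absurd rfl hσ
  | append_singleton τ a ih =>
    rcases eq_or_ne τ [] with rfl | hτ
    · simpa using hJdiam1 a
    rw [hJdiam τ a hτ hadm, ih hτ (hadm.of_prefix (List.prefix_append _ _)),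
      wprod_append_singleton hτ, mul_comm]

lemma cylinder_subset_of_prefix
    (hJsub : ∀ (σ : List (Fin N)) (a : Fin N), σ ≠ [] → Adm P (σ ++ [a]) → J (σ ++ [a]) ⊆ J σ)
    (hρ : ρ ≠ []) (hρσ : ρ <+: σ) (hσ : Adm P σ) : J σ ⊆ J ρ := by
  induction σ using List.reverseRecOn with
  | nil => exact absurd (List.prefix_nil.1 hρσ) hρ
  | append_singleton τ a ih =>
    rcases List.prefix_concat_iff.1 hρσ with rfl | hρτ
    · exact subset_rfl
    have hτ : τ ≠ [] := fun h => hρ (List.prefix_nil.1 (h ▸ hρτ))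
    exact (hJsub τ a hτ hσ).trans (ih hρτ (hσ.of_prefix (List.prefix_append _ _)))

/-- Two cylinders with the same first letter, neither containing the other, lie in two distinct
children of their longest common prefix, and these are separated. -/
lemma le_dist_of_not_prefix [PseudoMetricSpace X]
    (hJb : ∀ σ : List (Fin N), σ ≠ [] → Adm P σ → Bornology.IsBounded (J σ))
    (hJsub : ∀ (σ : List (Fin N)) (a : Fin N), σ ≠ [] → Adm P (σ ++ [a]) → J (σ ++ [a]) ⊆ J σ)
    {t : ℝ} (ht : 0 ≤ t)
    (hsep : ∀ (σ : List (Fin N)) (a b : Fin N), σ ≠ [] → a ≠ b →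
      Adm P (σ ++ [a]) → Adm P (σ ++ [b]) →
      ∀ x ∈ J (σ ++ [a]), ∀ y ∈ J (σ ++ [b]),
        t * max (diam (J (σ ++ [a]))) (diam (J (σ ++ [b]))) ≤ dist x y)
    (hσ : Adm P σ) (hω : Adm P ω) (hσω : ¬ σ <+: ω) (hωσ : ¬ ω <+: σ)
    (hhead : σ.head? = ω.head?) {x y : X} (hx : x ∈ J σ) (hy : y ∈ J ω) :
    t * max (diam (J σ)) (diam (J ω)) ≤ dist x y := by
  obtain ⟨l, a, b, s₁, s₂, hab, rfl, rfl⟩ := List.exists_eq_append_cons_of_not_prefix hσω hωσ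
  have hl : l ≠ [] := by
    rintro rfl
    exact hab (by simpa using hhead)
  have hpre : ∀ d s, l ++ [d] <+: l ++ d :: s := fun d s => ⟨s, by simp⟩
  have ha := hσ.of_prefix (hpre a s₁)
  have hb := hω.of_prefix (hpre b s₂)
  have hsubσ := cylinder_subset_of_prefix hJsub (by simp) (hpre a s₁) hσ
  have hsubω := cylinder_subset_of_prefix hJsub (by simp) (hpre b s₂) hω
  refine le_trans ?_ (hsep l a b hl hab ha hb x (hsubσ hx) y (hsubω hy))
  exact mul_le_mul_of_nonneg_left (max_le_max (diam_mono hsubσ (hJb _ (by simp) ha))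
    (diam_mono hsubω (hJb _ (by simp) hb))) ht

lemma measureReal_cylinder [MeasurableSpace X] {μ : Measure X} {χ : Fin N → ℝ}
    (hχ : ∀ i, 0 ≤ χ i)
    (hμJ : ∀ (σ : List (Fin N)) (h : σ ≠ []), Adm P σ →
      μ (J σ) = ENNReal.ofReal (χ (σ.head h) * wprod P σ))
    (hσ : σ ≠ []) (hadm : Adm P σ) : μ.real (J σ) = χ (σ.head hσ) * wprod P σ := by
  rw [measureReal_def, hμJ σ hσ hadm, ENNReal.toReal_ofReal
    (mul_nonneg (hχ _) (wprod_pos (fun _ _ h => h) hadm).le)]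

lemma ae_exists_mem_levelWords [TopologicalSpace X] [T2Space X] [MeasurableSpace X]
    [OpensMeasurableSpace X] {μ : Measure X} [IsProbabilityMeasure μ] {W : Matrix (Fin N) (Fin N) ℝ}
    {θ δ : ℝ} (hJc : ∀ σ : List (Fin N), σ ≠ [] → Adm P σ → IsCompact (J σ))
    (hJsub : ∀ (σ : List (Fin N)) (a : Fin N), σ ≠ [] → Adm P (σ ++ [a]) → J (σ ++ [a]) ⊆ J σ)
    (hμE : μ (⋂ k : ℕ, ⋃ (σ : List (Fin N)) (_ : σ.length = k + 1 ∧ Adm P σ), J σ) = 1)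
    (hW : ∀ i j, 0 < P i j → 0 < W i j) (hWθ : ∀ i j, 0 < P i j → W i j ≤ θ) (hθ : θ < 1)
    (hδ : 0 < δ) (hδ1 : δ ≤ 1) :
    ∀ᵐ x ∂μ, ∃ σ ∈ levelWords P W δ, x ∈ J σ := by
  obtain ⟨k, hk⟩ := exists_pow_lt_of_lt_one hδ hθ
  have hmeas : MeasurableSet (⋃ σ ∈ levelWords P W δ, J σ) :=
    (levelWords_finite hW hWθ hθ hδ).measurableSet_biUnion
      fun σ hσ => (hJc σ hσ.1 hσ.2.1).measurableSet
  have hcover : ⋂ k : ℕ, ⋃ (σ : List (Fin N)) (_ : σ.length = k + 1 ∧ Adm P σ), J σ ⊆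
      ⋃ σ ∈ levelWords P W δ, J σ := by
    refine (Set.iInter_subset _ k).trans (Set.iUnion₂_subset fun σ ⟨hlen, hadm⟩ => ?_)
    have hσ : σ ≠ [] := List.ne_nil_of_length_eq_add_one hlen
    have hlt : wprod W σ < δ := by
      have := wprod_le_pow_length hW hWθ hadm hσ
      rw [hlen, Nat.add_sub_cancel] at this
      linarith
    obtain ⟨ρ, hρ, hρσ⟩ := exists_prefix_mem_levelWords hδ1 hσ hadm hlt
    exact (cylinder_subset_of_prefix hJsub hρ.1 hρσ hadm).trans (Set.subset_biUnion_of_mem hρ)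
  have := (mem_ae_iff_prob_eq_one hmeas).2 (le_antisymm prob_le_one (hμE ▸ measure_mono hcover))
  filter_upwards [this] with x hx
  simpa using hx

end Cylinders

section Bounds

variable {q : ℕ} {P c : Matrix (Fin N) (Fin N) ℝ} {r : ℝ}
  {J : List (Fin N) → Set (EuclideanSpace ℝ (Fin q))} {μ : Measure (EuclideanSpace ℝ (Fin q))}
  {χ : Fin N → ℝ}

lemma quantErr_rpow_le_sum_cylinders [IsFiniteMeasure μ] (hr : 0 < r)
    (hc : ∀ i j, 0 < P i j → 0 < c i j)
    (hJc : ∀ σ : List (Fin N), σ ≠ [] → Adm P σ → IsCompact (J σ))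
    (hJne : ∀ σ : List (Fin N), σ ≠ [] → Adm P σ → (J σ).Nonempty)
    (hJdiam1 : ∀ i : Fin N, diam (J [i]) = 1)
    (hJdiam : ∀ (σ : List (Fin N)) (a : Fin N) (h : σ ≠ []), Adm P (σ ++ [a]) →
      diam (J (σ ++ [a])) = c (σ.getLast h) a * diam (J σ))
    (hχ0 : ∀ i, 0 ≤ χ i) (hχ1 : ∀ i, χ i ≤ 1)
    (hμJ : ∀ (σ : List (Fin N)) (h : σ ≠ []), Adm P σ →
      μ (J σ) = ENNReal.ofReal (χ (σ.head h) * wprod P σ))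
    {Γ : Finset (List (Fin N))} (hΓ : Γ.Nonempty) (hΓadm : ∀ σ ∈ Γ, σ ≠ [] ∧ Adm P σ)
    (hcover : ∀ᵐ x ∂μ, ∃ σ ∈ Γ, x ∈ J σ) :
    quantErr μ r #Γ ^ r ≤ ∑ σ ∈ Γ, wprod P σ * wprod c σ ^ r := by
  refine (quantErr_rpow_le_sum hr hΓ (fun σ hσ => ⟨hJc σ (hΓadm σ hσ).1 (hΓadm σ hσ).2,
    hJne σ (hΓadm σ hσ).1 (hΓadm σ hσ).2⟩) hcover).trans (sum_le_sum fun σ hσ => ?_)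
  obtain ⟨h0, hadm⟩ := hΓadm σ hσ
  rw [measureReal_cylinder hχ0 hμJ h0 hadm, diam_cylinder_eq_wprod hJdiam1 hJdiam h0 hadm,
    mul_assoc]
  exact mul_le_of_le_one_left (mul_nonneg (wprod_pos (fun _ _ h => h) hadm).le
    (Real.rpow_nonneg (wprod_pos hc hadm).le r)) (hχ1 _)

/-- The first letter of a word is the label in `card_sub_mul_le_integral_infDist_rpow`. -/
lemma card_sub_mul_le_integral_cylinders [IsFiniteMeasure μ] (hr : 0 < r)
    (hc : ∀ i j, 0 < P i j → 0 < c i j)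
    (hJc : ∀ σ : List (Fin N), σ ≠ [] → Adm P σ → IsCompact (J σ))
    (hJdiam1 : ∀ i : Fin N, diam (J [i]) = 1)
    (hJsub : ∀ (σ : List (Fin N)) (a : Fin N), σ ≠ [] → Adm P (σ ++ [a]) → J (σ ++ [a]) ⊆ J σ)
    (hJdiam : ∀ (σ : List (Fin N)) (a : Fin N) (h : σ ≠ []), Adm P (σ ++ [a]) →
      diam (J (σ ++ [a])) = c (σ.getLast h) a * diam (J σ))
    {t : ℝ} (ht : 0 < t)
    (hsep : ∀ (σ : List (Fin N)) (a b : Fin N), σ ≠ [] → a ≠ b →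
      Adm P (σ ++ [a]) → Adm P (σ ++ [b]) →
      ∀ x ∈ J (σ ++ [a]), ∀ y ∈ J (σ ++ [b]),
        t * max (diam (J (σ ++ [a]))) (diam (J (σ ++ [b]))) ≤ dist x y)
    {χ₀ : ℝ} (hχ₀ : 0 ≤ χ₀) (hχ₀χ : ∀ i, χ₀ ≤ χ i)
    (hμJ : ∀ (σ : List (Fin N)) (h : σ ≠ []), Adm P σ →
      μ (J σ) = ENNReal.ofReal (χ (σ.head h) * wprod P σ))
    {Γ : Finset (List (Fin N))} (hΓadm : ∀ σ ∈ Γ, σ ≠ [] ∧ Adm P σ)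
    (hanti : ∀ σ ∈ Γ, ∀ ω ∈ Γ, σ <+: ω → σ = ω)
    {κ : ℝ} (hκ0 : 0 ≤ κ) (hκ : ∀ σ ∈ Γ, κ ≤ wprod P σ * wprod c σ ^ r)
    {α : Finset (EuclideanSpace ℝ (Fin q))} (hα : α.Nonempty)
    (hint : Integrable (fun x => infDist x (α : Set _) ^ r) μ) :
    ((#Γ : ℝ) - (N + 1) * #α) * ((t / 2) ^ r * χ₀ * κ) ≤
      (N + 1) * ∫ x, infDist x (α : Set _) ^ r ∂μ := by
  have hχ0 : ∀ i, 0 ≤ χ i := fun i => hχ₀.trans (hχ₀χ i)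
  have hdiam : ∀ σ ∈ Γ, diam (J σ) = wprod c σ := fun σ hσ =>
    diam_cylinder_eq_wprod hJdiam1 hJdiam (hΓadm σ hσ).1 (hΓadm σ hσ).2
  have hsepΓ : ∀ σ ∈ Γ, ∀ ω ∈ Γ, σ ≠ ω → σ.head? = ω.head? → ∀ x ∈ J σ, ∀ y ∈ J ω,
      t / 2 * wprod c σ + t / 2 * wprod c ω ≤ dist x y := by
    intro σ hσ ω hω hne hhead x hx y hy
    have := le_dist_of_not_prefix (fun σ h ha => (hJc σ h ha).isBounded) hJsub ht.le hsep
      (hΓadm σ hσ).2 (hΓadm ω hω).2 (fun h => hne (hanti σ hσ ω hω h))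
      (fun h => hne (hanti ω hω σ hσ h).symm) hhead hx hy
    rw [hdiam σ hσ, hdiam ω hω] at this
    nlinarith [le_max_left (wprod c σ) (wprod c ω), le_max_right (wprod c σ) (wprod c ω)]
  have hκΓ : ∀ σ ∈ Γ, (t / 2) ^ r * χ₀ * κ ≤ (t / 2 * wprod c σ) ^ r * μ.real (J σ) := by
    intro σ hσ
    obtain ⟨h0, hadm⟩ := hΓadm σ hσ
    have hcσ := wprod_pos hc hadm
    rw [measureReal_cylinder hχ0 hμJ h0 hadm, Real.mul_rpow (by positivity) hcσ.le]
    calc (t / 2) ^ r * χ₀ * κ ≤ (t / 2) ^ r * χ (σ.head h0) * (wprod P σ * wprod c σ ^ r) := by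
          gcongr
          exacts [mul_nonneg (by positivity) (hχ0 _), hχ₀χ _, hκ σ hσ]
      _ = _ := by ring
  have := card_sub_mul_le_integral_infDist_rpow (lab := List.head?) hsepΓ
    (fun σ hσ => mul_pos (half_pos ht) (wprod_pos hc (hΓadm σ hσ).2))
    (fun σ hσ => (hJc σ (hΓadm σ hσ).1 (hΓadm σ hσ).2).measurableSet) hr.le (by positivity) hκΓ
    hα hint
  simpa [Fintype.card_option] using this

/-- `Λ(δ η^(2N+2))` has at least `(N + 2) · #Λ(δ)` words, so at least `#Λ(δ)` of them are far
from a set `α` of at most `#Λ(δ)` points, each contributing at least `(t/2)^r χ₀ δ η^(2N+3)`. -/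
lemma ncard_mul_le_integral_levelWords [IsFiniteMeasure μ] (hr : 0 < r)
    (hout2 : ∀ i, ∃ a b, a ≠ b ∧ 0 < P i a ∧ 0 < P i b) (hc : ∀ i j, 0 < P i j → 0 < c i j)
    {θ : ℝ} (hθ : θ < 1) (hWθ : ∀ i j, 0 < P i j → edgeWeight P c r i j ≤ θ)
    (hη : 0 < eta P c r)
    (hJc : ∀ σ : List (Fin N), σ ≠ [] → Adm P σ → IsCompact (J σ))
    (hJdiam1 : ∀ i : Fin N, diam (J [i]) = 1)
    (hJsub : ∀ (σ : List (Fin N)) (a : Fin N), σ ≠ [] → Adm P (σ ++ [a]) → J (σ ++ [a]) ⊆ J σ)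
    (hJdiam : ∀ (σ : List (Fin N)) (a : Fin N) (h : σ ≠ []), Adm P (σ ++ [a]) →
      diam (J (σ ++ [a])) = c (σ.getLast h) a * diam (J σ))
    {t : ℝ} (ht : 0 < t)
    (hsep : ∀ (σ : List (Fin N)) (a b : Fin N), σ ≠ [] → a ≠ b →
      Adm P (σ ++ [a]) → Adm P (σ ++ [b]) →
      ∀ x ∈ J (σ ++ [a]), ∀ y ∈ J (σ ++ [b]),
        t * max (diam (J (σ ++ [a]))) (diam (J (σ ++ [b]))) ≤ dist x y)
    {χ₀ : ℝ} (hχ₀ : 0 ≤ χ₀) (hχ₀χ : ∀ i, χ₀ ≤ χ i)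
    (hμJ : ∀ (σ : List (Fin N)) (h : σ ≠ []), Adm P σ →
      μ (J σ) = ENNReal.ofReal (χ (σ.head h) * wprod P σ))
    {δ : ℝ} (hδ : 0 < δ) {α : Finset (EuclideanSpace ℝ (Fin q))} (hα : α.Nonempty)
    (hαn : #α ≤ (levelWords P (edgeWeight P c r) δ).ncard)
    (hint : Integrable (fun x => infDist x (α : Set _) ^ r) μ) :
    (levelWords P (edgeWeight P c r) δ).ncard *
        ((t / 2) ^ r * χ₀ * (δ * eta P c r ^ (2 * N + 3))) ≤
      (N + 1) * ∫ x, infDist x (α : Set _) ^ r ∂μ := by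
  set η := eta P c r
  set W := edgeWeight P c r
  set n := (levelWords P W δ).ncard
  have hW : ∀ i j, 0 < P i j → 0 < W i j := fun _ _ => edgeWeight_pos hc
  have hW1 : ∀ i j, 0 < P i j → W i j ≤ 1 := fun i j h => (hWθ i j h).trans hθ.le
  have hδ' : 0 < δ * η ^ (2 * (N + 1)) := by positivity
  have hfin := levelWords_finite hW hWθ hθ hδ'
  set Γ := hfin.toFinset
  have hgrowth : (N + 2) * n ≤ #Γ := calc
    (N + 2) * n ≤ 2 ^ (N + 1) * n := Nat.mul_le_mul_right _ Nat.lt_two_pow_self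
    _ ≤ #Γ := (two_pow_mul_ncard_levelWords_le hout2 hη (fun _ _ => eta_le_edgeWeight) hWθ
      hθ hδ (N + 1)).trans (Set.ncard_eq_toFinset_card _ hfin).le
  have hfar : (n : ℝ) ≤ #Γ - (N + 1) * #α := by
    have : (N + 1) * #α + n ≤ #Γ := by nlinarith
    have : ((N + 1) * #α + n : ℝ) ≤ #Γ := by exact_mod_cast this
    linarith
  have key := card_sub_mul_le_integral_cylinders hr hc hJc hJdiam1 hJsub hJdiam ht hsep hχ₀ hχ₀χ
    hμJ (Γ := Γ) (fun σ hσ => ⟨(hfin.mem_toFinset.1 hσ).1, (hfin.mem_toFinset.1 hσ).2.1⟩)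
    (fun σ hσ ω hω => eq_of_prefix_of_mem_levelWords hW hW1 (hfin.mem_toFinset.1 hσ)
      (hfin.mem_toFinset.1 hω))
    (κ := δ * η ^ (2 * (N + 1)) * η) (by positivity)
    (fun σ hσ => by
      rw [wprod_mul_wprod_rpow hc (hfin.mem_toFinset.1 hσ).2.1]
      exact mul_le_wprod_of_mem_levelWords hη (fun _ _ => eta_le_edgeWeight)
        (hfin.mem_toFinset.1 hσ))
    hα hint
  calc (n : ℝ) * ((t / 2) ^ r * χ₀ * (δ * η ^ (2 * N + 3)))
      = n * ((t / 2) ^ r * χ₀ * (δ * η ^ (2 * (N + 1)) * η)) := by ring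
    _ ≤ (#Γ - (N + 1) * #α) * ((t / 2) ^ r * χ₀ * (δ * η ^ (2 * (N + 1)) * η)) :=
      mul_le_mul_of_nonneg_right hfar (by positivity)
    _ ≤ (N + 1) * ∫ x, infDist x (α : Set _) ^ r ∂μ := key

lemma quantErr_rpow_phi_le_sum [IsProbabilityMeasure μ] (hr : 0 < r) (i₀ : Fin N)
    (hout : ∀ i, ∃ j, 0 < P i j) (hc : ∀ i j, 0 < P i j → 0 < c i j)
    {θ : ℝ} (hθ : θ < 1) (hWθ : ∀ i j, 0 < P i j → edgeWeight P c r i j ≤ θ)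
    (hJc : ∀ σ : List (Fin N), σ ≠ [] → Adm P σ → IsCompact (J σ))
    (hJne : ∀ σ : List (Fin N), σ ≠ [] → Adm P σ → (J σ).Nonempty)
    (hJdiam1 : ∀ i : Fin N, diam (J [i]) = 1)
    (hJsub : ∀ (σ : List (Fin N)) (a : Fin N), σ ≠ [] → Adm P (σ ++ [a]) → J (σ ++ [a]) ⊆ J σ)
    (hJdiam : ∀ (σ : List (Fin N)) (a : Fin N) (h : σ ≠ []), Adm P (σ ++ [a]) →
      diam (J (σ ++ [a])) = c (σ.getLast h) a * diam (J σ))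
    (hχ0 : ∀ i, 0 ≤ χ i) (hχ1 : ∀ i, χ i ≤ 1)
    (hμE : μ (⋂ k : ℕ, ⋃ (σ : List (Fin N)) (_ : σ.length = k + 1 ∧ Adm P σ), J σ) = 1)
    (hμJ : ∀ (σ : List (Fin N)) (h : σ ≠ []), Adm P σ →
      μ (J σ) = ENNReal.ofReal (χ (σ.head h) * wprod P σ)) (j : ℕ) :
    quantErr μ r (phi P c r j) ^ r ≤ ∑ᶠ σ ∈ Lambda P c r j, wprod P σ * wprod c σ ^ r := by
  have hW : ∀ i j, 0 < P i j → 0 < edgeWeight P c r i j := fun _ _ => edgeWeight_pos hc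
  have hη : 0 < eta P c r := eta_pos i₀ hout hc
  have hδ1 : eta P c r ^ j ≤ 1 := by
    obtain ⟨a, ha⟩ := hout i₀
    exact pow_le_one₀ hη.le ((eta_le_edgeWeight ha).trans ((hWθ _ _ ha).trans hθ.le))
  have hfin := levelWords_finite hW hWθ hθ (pow_pos hη j)
  rw [phi, Lambda_eq_levelWords hc, Set.ncard_eq_toFinset_card _ hfin,
    finsum_mem_eq_finite_toFinset_sum _ hfin]
  refine quantErr_rpow_le_sum_cylinders hr hc hJc hJne hJdiam1 hJdiam hχ0 hχ1 hμJ
    (hfin.toFinset_nonempty.2 (levelWords_nonempty i₀ hout hW hWθ hθ (pow_pos hη j) hδ1))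
    (fun σ hσ => ⟨(hfin.mem_toFinset.1 hσ).1, (hfin.mem_toFinset.1 hσ).2.1⟩) ?_
  filter_upwards [ae_exists_mem_levelWords hJc hJsub hμE hW hWθ hθ (pow_pos hη j) hδ1]
    with x ⟨σ, hσ, hx⟩
  exact ⟨σ, hfin.mem_toFinset.2 hσ, hx⟩

lemma mul_sum_le_quantErr_rpow_phi [IsProbabilityMeasure μ] (hr : 0 < r) (i₀ : Fin N)
    (hout2 : ∀ i, ∃ a b, a ≠ b ∧ 0 < P i a ∧ 0 < P i b) (hc : ∀ i j, 0 < P i j → 0 < c i j)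
    {θ : ℝ} (hθ : θ < 1) (hWθ : ∀ i j, 0 < P i j → edgeWeight P c r i j ≤ θ)
    (hJc : ∀ σ : List (Fin N), σ ≠ [] → Adm P σ → IsCompact (J σ))
    (hJdiam1 : ∀ i : Fin N, diam (J [i]) = 1)
    (hJsub : ∀ (σ : List (Fin N)) (a : Fin N), σ ≠ [] → Adm P (σ ++ [a]) → J (σ ++ [a]) ⊆ J σ)
    (hJdiam : ∀ (σ : List (Fin N)) (a : Fin N) (h : σ ≠ []), Adm P (σ ++ [a]) →
      diam (J (σ ++ [a])) = c (σ.getLast h) a * diam (J σ))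
    {t : ℝ} (ht : 0 < t)
    (hsep : ∀ (σ : List (Fin N)) (a b : Fin N), σ ≠ [] → a ≠ b →
      Adm P (σ ++ [a]) → Adm P (σ ++ [b]) →
      ∀ x ∈ J (σ ++ [a]), ∀ y ∈ J (σ ++ [b]),
        t * max (diam (J (σ ++ [a]))) (diam (J (σ ++ [b]))) ≤ dist x y)
    {χ₀ : ℝ} (hχ₀ : 0 ≤ χ₀) (hχ₀χ : ∀ i, χ₀ ≤ χ i)
    (hμE : μ (⋂ k : ℕ, ⋃ (σ : List (Fin N)) (_ : σ.length = k + 1 ∧ Adm P σ), J σ) = 1)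
    (hμJ : ∀ (σ : List (Fin N)) (h : σ ≠ []), Adm P σ →
      μ (J σ) = ENNReal.ofReal (χ (σ.head h) * wprod P σ)) (j : ℕ) :
    (t / 2) ^ r * χ₀ * eta P c r ^ (2 * N + 3) / (N + 1) *
        ∑ᶠ σ ∈ Lambda P c r j, wprod P σ * wprod c σ ^ r ≤
      quantErr μ r (phi P c r j) ^ r := by
  set η := eta P c r
  have hout : ∀ i, ∃ j, 0 < P i j := fun i => (hout2 i).imp fun _ ⟨_, _, ha, _⟩ => ha
  have hW : ∀ i j, 0 < P i j → 0 < edgeWeight P c r i j := fun _ _ => edgeWeight_pos hc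
  have hη : 0 < η := eta_pos i₀ hout hc
  have hδ1 : η ^ j ≤ 1 := by
    obtain ⟨a, ha⟩ := hout i₀
    exact pow_le_one₀ hη.le ((eta_le_edgeWeight ha).trans ((hWθ _ _ ha).trans hθ.le))
  have hfin := levelWords_finite hW hWθ hθ (pow_pos hη j)
  have hmem : ∀ σ ∈ hfin.toFinset, σ ∈ levelWords P (edgeWeight P c r) (η ^ j) :=
    fun σ hσ => hfin.mem_toFinset.1 hσ
  rw [phi, Lambda_eq_levelWords hc, finsum_mem_eq_finite_toFinset_sum _ hfin]
  set n := (levelWords P (edgeWeight P c r) (η ^ j)).ncard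
  have hsum : ∑ σ ∈ hfin.toFinset, wprod P σ * wprod c σ ^ r ≤ n * η ^ j := by
    rw [show n = #hfin.toFinset from Set.ncard_eq_toFinset_card _ hfin, ← nsmul_eq_mul]
    exact sum_le_card_nsmul _ _ _ fun σ hσ =>
      ((wprod_mul_wprod_rpow hc (hmem σ hσ).2.1).trans_lt (hmem σ hσ).2.2.2).le
  have hS0 : 0 ≤ ∑ σ ∈ hfin.toFinset, wprod P σ * wprod c σ ^ r := sum_nonneg fun σ hσ =>
    (mul_pos (wprod_pos (fun _ _ h => h) (hmem σ hσ).2.1)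
      (Real.rpow_pos_of_pos (wprod_pos hc (hmem σ hσ).2.1) r)).le
  have hn : 1 ≤ n := (Set.ncard_pos hfin).2
    (levelWords_nonempty i₀ hout hW hWθ hθ (pow_pos hη j) hδ1)
  refine le_quantErr_rpow hr hn (by positivity) fun α hα hαn => ?_
  have hint : Integrable (fun x => infDist x (α : Set _) ^ r) μ :=
    integrable_infDist_rpow ((Bornology.isBounded_biUnion hfin).2 fun σ hσ =>
      (hJc σ hσ.1 hσ.2.1).isBounded)
      (by filter_upwards [ae_exists_mem_levelWords hJc hJsub hμE hW hWθ hθ (pow_pos hη j) hδ1]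
            with x ⟨σ, hσ, hx⟩
          exact Set.mem_biUnion hσ hx)
      (coe_nonempty.2 hα) hr.le
  have key := ncard_mul_le_integral_levelWords hr hout2 hc hθ hWθ hη hJc hJdiam1 hJsub hJdiam ht
    hsep hχ₀ hχ₀χ hμJ (pow_pos hη j) hα hαn hint
  calc (t / 2) ^ r * χ₀ * η ^ (2 * N + 3) / (N + 1) *
        ∑ σ ∈ hfin.toFinset, wprod P σ * wprod c σ ^ r
      ≤ (t / 2) ^ r * χ₀ * η ^ (2 * N + 3) / (N + 1) * (n * η ^ j) :=
        mul_le_mul_of_nonneg_left hsum (by positivity)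
    _ = n * ((t / 2) ^ r * χ₀ * (η ^ j * η ^ (2 * N + 3))) / (N + 1) := by ring
    _ ≤ ∫ x, infDist x (α : Set _) ^ r ∂μ := by
        rw [div_le_iff₀ (by positivity)]
        linarith

end Bounds

end QM

open QM in
theorem quantErr_comparable_to_sum_general
    {q : ℕ}
    {N : ℕ} (hN : 2 ≤ N)
    (P c : Matrix (Fin N) (Fin N) ℝ) (r : ℝ) (hr : 0 < r)
    (hP0 : ∀ i j, 0 ≤ P i j)
    (hProw : ∀ i, ∑ j, P i j = 1)
    (hPcard : ∀ i : Fin N, 2 ≤ {j : Fin N | 0 < P i j}.ncard)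
    (hc1 : ∀ i j, 0 < P i j → 0 < c i j ∧ c i j < 1)
    (J : List (Fin N) → Set (EuclideanSpace ℝ (Fin q)))
    (hJ : ∀ σ : List (Fin N), σ ≠ [] → QM.Adm P σ →
      IsCompact (J σ) ∧ (J σ).Nonempty ∧ J σ = closure (interior (J σ)))
    (hJdiam1 : ∀ i : Fin N, Metric.diam (J [i]) = 1)
    (hJsub : ∀ (σ : List (Fin N)) (a : Fin N), σ ≠ [] → QM.Adm P (σ ++ [a]) →
      J (σ ++ [a]) ⊆ J σ)
    (hJdiam : ∀ (σ : List (Fin N)) (a : Fin N) (h : σ ≠ []), QM.Adm P (σ ++ [a]) →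
      Metric.diam (J (σ ++ [a])) = c (σ.getLast h) a * Metric.diam (J σ))
    (hsep : ∃ t : ℝ, 0 < t ∧ t < 1 ∧ ∀ (σ : List (Fin N)) (a b : Fin N), σ ≠ [] → a ≠ b →
      QM.Adm P (σ ++ [a]) → QM.Adm P (σ ++ [b]) →
      ∀ x ∈ J (σ ++ [a]), ∀ y ∈ J (σ ++ [b]),
        t * max (Metric.diam (J (σ ++ [a]))) (Metric.diam (J (σ ++ [b]))) ≤ dist x y)
    (χ : Fin N → ℝ) (hχpos : ∀ i, 0 < χ i) (hχsum : ∑ i, χ i = 1)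
    (μ : Measure (EuclideanSpace ℝ (Fin q))) (hprob : IsProbabilityMeasure μ)
    (hμE : μ (⋂ k : ℕ, ⋃ (σ : List (Fin N)) (_ : σ.length = k + 1 ∧ QM.Adm P σ), J σ) = 1)
    (hμJ : ∀ (σ : List (Fin N)) (h : σ ≠ []), QM.Adm P σ →
      μ (J σ) = ENNReal.ofReal (χ (σ.head h) * QM.wprod P σ))
    :
    ∃ C₁ C₂ : ℝ, 0 < C₁ ∧ C₁ ≤ C₂ ∧ ∃ j₀ : ℕ, ∀ j : ℕ, j₀ ≤ j →
      C₁ * (∑ᶠ σ ∈ QM.Lambda P c r j, QM.wprod P σ * QM.wprod c σ ^ r) ≤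
          QM.quantErr μ r (QM.phi P c r j) ^ r ∧
      QM.quantErr μ r (QM.phi P c r j) ^ r ≤
          C₂ * (∑ᶠ σ ∈ QM.Lambda P c r j, QM.wprod P σ * QM.wprod c σ ^ r) := by
  have := hprob
  obtain ⟨t, ht, -, hsep⟩ := hsep
  have i₀ : Fin N := ⟨0, by omega⟩
  have hc : ∀ i j, 0 < P i j → 0 < c i j := fun i j h => (hc1 i j h).1
  have hout2 := exists_two_edges hPcard
  have hout : ∀ i, ∃ j, 0 < P i j := fun i => (hout2 i).imp fun _ ⟨_, _, ha, _⟩ => ha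
  obtain ⟨θ, hθ, hWθ⟩ := exists_edgeWeight_le i₀ hout hr hP0 hProw hc1
  obtain ⟨i₁, -, hi₁⟩ := Finset.univ.exists_min_image χ ⟨i₀, Finset.mem_univ _⟩
  have hχ1 : ∀ i, χ i ≤ 1 := fun i =>
    hχsum ▸ Finset.single_le_sum (fun k _ => (hχpos k).le) (Finset.mem_univ i)
  have hJc := fun σ h ha => (hJ σ h ha).1
  have hη := eta_pos (r := r) i₀ hout hc
  have hC : 0 < (t / 2) ^ r * χ i₁ * eta P c r ^ (2 * N + 3) / (N + 1) := by
    have := hχpos i₁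
    positivity
  refine ⟨_, _, hC, le_max_left _ 1, 0, fun j _ => ⟨?_, ?_⟩⟩
  · exact mul_sum_le_quantErr_rpow_phi hr i₀ hout2 hc hθ hWθ hJc hJdiam1 hJsub hJdiam ht hsep
      (hχpos i₁).le (fun i => hi₁ i (Finset.mem_univ i)) hμE hμJ j
  · have hS : 0 ≤ ∑ᶠ σ ∈ Lambda P c r j, wprod P σ * wprod c σ ^ r :=
      finsum_nonneg fun σ => finsum_nonneg fun hσ => (mul_pos (wprod_pos (fun _ _ h => h) hσ.2.1)
        (Real.rpow_pos_of_pos (wprod_pos hc hσ.2.1) r)).le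
    exact (quantErr_rpow_phi_le_sum hr i₀ hout hc hθ hWθ hJc (fun σ h ha => (hJ σ h ha).2.1)
      hJdiam1 hJsub hJdiam (fun i => (hχpos i).le) hχ1 hμE hμJ j).trans
      (le_mul_of_one_le_left hS (le_max_right _ _))

open QM in
theorem quantErr_comparable_to_sum
    {q : ℕ}
    {N : ℕ} (hN : 2 ≤ N)
    (P c : Matrix (Fin N) (Fin N) ℝ) (r : ℝ) (hr : 0 < r)
    (hP0 : ∀ i j, 0 ≤ P i j)
    (hProw : ∀ i, ∑ j, P i j = 1)
    (hPcard : ∀ i : Fin N, 2 ≤ {j : Fin N | 0 < P i j}.ncard)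
    (hc1 : ∀ i j, 0 < P i j → 0 < c i j ∧ c i j < 1)
    (hc0 : ∀ i j, P i j = 0 → c i j = 0)
    (J : List (Fin N) → Set (EuclideanSpace ℝ (Fin q)))
    (hJ : ∀ σ : List (Fin N), σ ≠ [] → QM.Adm P σ →
      IsCompact (J σ) ∧ (J σ).Nonempty ∧ J σ = closure (interior (J σ)))
    (hJdiam1 : ∀ i : Fin N, Metric.diam (J [i]) = 1)
    (hJsub : ∀ (σ : List (Fin N)) (a : Fin N), σ ≠ [] → QM.Adm P (σ ++ [a]) →
      J (σ ++ [a]) ⊆ J σ)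
    (hJdisj : ∀ (σ : List (Fin N)) (a b : Fin N), σ ≠ [] → a ≠ b →
      QM.Adm P (σ ++ [a]) → QM.Adm P (σ ++ [b]) →
      Disjoint (interior (J (σ ++ [a]))) (interior (J (σ ++ [b]))))
    (hJdiam : ∀ (σ : List (Fin N)) (a : Fin N) (h : σ ≠ []), QM.Adm P (σ ++ [a]) →
      Metric.diam (J (σ ++ [a])) = c (σ.getLast h) a * Metric.diam (J σ))
    (hsep : ∃ t : ℝ, 0 < t ∧ t < 1 ∧ ∀ (σ : List (Fin N)) (a b : Fin N), σ ≠ [] → a ≠ b →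
      QM.Adm P (σ ++ [a]) → QM.Adm P (σ ++ [b]) →
      ∀ x ∈ J (σ ++ [a]), ∀ y ∈ J (σ ++ [b]),
        t * max (Metric.diam (J (σ ++ [a]))) (Metric.diam (J (σ ++ [b]))) ≤ dist x y)
    (χ : Fin N → ℝ) (hχpos : ∀ i, 0 < χ i) (hχsum : ∑ i, χ i = 1)
    (μ : Measure (EuclideanSpace ℝ (Fin q))) (hprob : IsProbabilityMeasure μ)
    (hμE : μ (⋂ k : ℕ, ⋃ (σ : List (Fin N)) (_ : σ.length = k + 1 ∧ QM.Adm P σ), J σ) = 1)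
    (hμJ : ∀ (σ : List (Fin N)) (h : σ ≠ []), QM.Adm P σ →
      μ (J σ) = ENNReal.ofReal (χ (σ.head h) * QM.wprod P σ))
    :
    ∃ C₁ C₂ : ℝ, 0 < C₁ ∧ C₁ ≤ C₂ ∧ ∃ j₀ : ℕ, ∀ j : ℕ, j₀ ≤ j →
      C₁ * (∑ᶠ σ ∈ QM.Lambda P c r j, QM.wprod P σ * QM.wprod c σ ^ r) ≤
          QM.quantErr μ r (QM.phi P c r j) ^ r ∧
      QM.quantErr μ r (QM.phi P c r j) ^ r ≤
          C₂ * (∑ᶠ σ ∈ QM.Lambda P c r j, QM.wprod P σ * QM.wprod c σ ^ r) :=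
  quantErr_comparable_to_sum_general hN P c r hr hP0 hProw hPcard hc1 J hJ hJdiam1 hJsub hJdiam hsep
    χ hχpos hχsum μ hprob hμE hμJ
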